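/- arXiv:2604.21009 — 2 statements merged into one kernel-verified Lean document; each statement's English description precedes it below -/
import Mathlib

section
/- The function h(D) = -(1/2)·log det(XᵀX + D) - c·log{b₀ + (1/2)(yᵀy - yᵀX(XᵀX + D)⁻¹Xᵀy)} is convex on the set of positive definite diagonal matrices D, for any constants b₀ > 0 and c > 0. -/
/-!
`log det` is concave on positive definite matrices: writing `A = S²` and `B = S N S`, we get
`a A + b B = S (a + b N) S`, so `det A ^ a * det B ^ b ≤ det (a A + b B)` reduces to
`det N ^ b ≤ det (a + b N)`, which is weighted AM–GM applied to the eigenvalues of `N`.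
The matrix fractional function `M ↦ vᵀ M⁻¹ v` is convex, being the supremum over `w` of the affine
functions `M ↦ 2 vᵀw - wᵀ M w`. At `M = XᵀX + D` it is at most `yᵀy`, so the argument of the second
logarithm is a concave function bounded below by `b₀ > 0`, and its logarithm is concave too.
Both terms are then pulled back along the affine map `d ↦ XᵀX + diag d`.
-/

open Matrix

namespace Matrix

variable {m n : Type*}

theorem convex_setOf_posDef : Convex ℝ {A : Matrix m m ℝ | A.PosDef} := by
  intro A hA B hB a b ha hb hab
  rcases ha.eq_or_lt with rfl | ha
  · simp_all
  · exact (hA.smul ha).add_posSemidef (hB.posSemidef.smul hb)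

variable [Fintype m]

theorem PosDef.dotProduct_mulVec_comm {M : Matrix m m ℝ} (hM : M.PosDef) (x z : m → ℝ) :
    x ⬝ᵥ (M *ᵥ z) = z ⬝ᵥ (M *ᵥ x) := by
  rw [dotProduct_mulVec, ← mulVec_transpose, dotProduct_comm]
  congr 2
  simpa using hM.isHermitian.eq

variable [DecidableEq m]

theorem IsHermitian.det_cfc {A : Matrix m m ℝ} (hA : A.IsHermitian) (f : ℝ → ℝ) :
    (cfc f A).det = ∏ i, f (hA.eigenvalues i) := by
  rw [hA.cfc_eq]
  simp [IsHermitian.cfc, -Unitary.conjStarAlgAut_apply]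

theorem PosDef.det_rpow_le_det_smul_one_add_smul {N : Matrix m m ℝ} (hN : N.PosDef) {a b : ℝ}
    (ha : 0 ≤ a) (hb : 0 ≤ b) (hab : a + b = 1) :
    N.det ^ b ≤ (a • 1 + b • N).det := by
  have hcfc : a • 1 + b • N = cfc (fun x => a + b * x) N := by
    have hN' : IsSelfAdjoint N := hN.isHermitian
    rw [cfc_const_add a (b * ·) N, cfc_const_mul_id b N, Algebra.algebraMap_eq_smul_one]
  rw [hcfc, hN.isHermitian.det_cfc, hN.isHermitian.det_eq_prod_eigenvalues]
  simp only [RCLike.ofReal_real_eq_id, id]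
  rw [← Real.finsetProd_rpow _ _ fun i _ => (hN.eigenvalues_pos i).le]
  refine Finset.prod_le_prod (fun i _ => Real.rpow_nonneg (hN.eigenvalues_pos i).le b) fun i _ => ?_
  simpa using Real.geom_mean_le_arith_mean2_weighted ha hb zero_le_one (hN.eigenvalues_pos i).le hab

theorem PosDef.det_rpow_mul_det_rpow_le {A B : Matrix m m ℝ} (hA : A.PosDef) (hB : B.PosDef)
    {a b : ℝ} (ha : 0 ≤ a) (hb : 0 ≤ b) (hab : a + b = 1) :
    A.det ^ a * B.det ^ b ≤ (a • A + b • B).det := by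
  obtain ⟨S, hS, hSS⟩ : ∃ S : Matrix m m ℝ, S.PosDef ∧ S * S = A := open scoped MatrixOrder in
    ⟨CFC.sqrt A, hA.isStrictlyPositive.sqrt.posDef, CFC.sqrt_mul_sqrt_self A hA.posSemidef.nonneg⟩
  have hSu : IsUnit S.det := (isUnit_iff_isUnit_det S).mp hS.isUnit
  obtain ⟨N, hN, hSNS⟩ : ∃ N : Matrix m m ℝ, N.PosDef ∧ S * N * S = B := by
    refine ⟨S⁻¹ * B * S⁻¹, ?_, ?_⟩
    · have := (IsUnit.posDef_star_left_conjugate_iff hS.inv.isUnit).mpr hB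
      rwa [star_eq_conjTranspose, hS.inv.isHermitian.eq] at this
    · simp only [← Matrix.mul_assoc, mul_nonsing_inv _ hSu, Matrix.one_mul]
      rw [Matrix.mul_assoc, nonsing_inv_mul _ hSu, Matrix.mul_one]
  have hdetB : B.det = A.det * N.det := by
    rw [← hSNS, ← hSS, det_mul, det_mul, det_mul]; ring
  have hdet : (a • A + b • B).det = A.det * (a • 1 + b • N).det := by
    have : a • A + b • B = S * (a • 1 + b • N) * S := by
      rw [← hSS, ← hSNS]
      simp only [Matrix.mul_add, Matrix.add_mul, Matrix.mul_smul, Matrix.smul_mul, Matrix.mul_one]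
    rw [this, ← hSS, det_mul, det_mul, det_mul]; ring
  calc A.det ^ a * B.det ^ b = A.det * N.det ^ b := by
        rw [hdetB, Real.mul_rpow hA.det_pos.le hN.det_pos.le, ← mul_assoc,
          ← Real.rpow_add hA.det_pos, hab, Real.rpow_one]
    _ ≤ A.det * (a • 1 + b • N).det :=
        mul_le_mul_of_nonneg_left (hN.det_rpow_le_det_smul_one_add_smul ha hb hab) hA.det_pos.le
    _ = (a • A + b • B).det := hdet.symm

theorem concaveOn_log_det : ConcaveOn ℝ {A : Matrix m m ℝ | A.PosDef} fun A => Real.log A.det := by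
  refine ⟨convex_setOf_posDef, fun A hA B hB a b ha hb hab => ?_⟩
  have hdetA := hA.det_pos
  have hdetB := hB.det_pos
  have := Real.log_le_log (by positivity) (hA.det_rpow_mul_det_rpow_le hB ha hb hab)
  rwa [Real.log_mul (by positivity) (by positivity), Real.log_rpow hdetA, Real.log_rpow hdetB]
    at this

theorem PosDef.mulVec_inv_mulVec {M : Matrix m m ℝ} (hM : M.PosDef) (v : m → ℝ) :
    M *ᵥ (M⁻¹ *ᵥ v) = v := by
  rw [mulVec_mulVec, mul_nonsing_inv _ hM.det_pos.ne'.isUnit, one_mulVec]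

theorem PosDef.two_mul_dotProduct_sub_le_dotProduct_inv_mulVec {M : Matrix m m ℝ} (hM : M.PosDef)
    (v w : m → ℝ) :
    2 * (v ⬝ᵥ w) - w ⬝ᵥ (M *ᵥ w) ≤ v ⬝ᵥ (M⁻¹ *ᵥ v) := by
  set u := M⁻¹ *ᵥ v
  have hMu : M *ᵥ u = v := hM.mulVec_inv_mulVec v
  have hnonneg : 0 ≤ (w - u) ⬝ᵥ (M *ᵥ (w - u)) := by
    simpa using hM.posSemidef.dotProduct_mulVec_nonneg (w - u)
  have hexpand : (w - u) ⬝ᵥ (M *ᵥ (w - u)) = w ⬝ᵥ (M *ᵥ w) - 2 * (v ⬝ᵥ w) + v ⬝ᵥ u := by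
    rw [mulVec_sub, dotProduct_sub, sub_dotProduct, sub_dotProduct, hM.dotProduct_mulVec_comm u w,
      hMu, dotProduct_comm u v, dotProduct_comm w v]
    ring
  linarith

theorem convexOn_dotProduct_inv_mulVec (v : m → ℝ) :
    ConvexOn ℝ {A : Matrix m m ℝ | A.PosDef} fun A => v ⬝ᵥ (A⁻¹ *ᵥ v) := by
  refine ⟨convex_setOf_posDef, fun A hA B hB a b ha hb hab => ?_⟩
  have hC : (a • A + b • B).PosDef := convex_setOf_posDef hA hB ha hb hab
  set w := (a • A + b • B)⁻¹ *ᵥ v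
  have hCw : (a • A + b • B) *ᵥ w = v := hC.mulVec_inv_mulVec v
  calc v ⬝ᵥ w
      = a * (2 * (v ⬝ᵥ w) - w ⬝ᵥ (A *ᵥ w)) + b * (2 * (v ⬝ᵥ w) - w ⬝ᵥ (B *ᵥ w)) := by
        have hsplit := congrArg (w ⬝ᵥ ·) hCw
        simp only [add_mulVec, smul_mulVec, dotProduct_add, dotProduct_smul, smul_eq_mul]
          at hsplit
        rw [dotProduct_comm w v] at hsplit
        linear_combination (-2 * (v ⬝ᵥ w)) * hab + hsplit
    _ ≤ a * (v ⬝ᵥ (A⁻¹ *ᵥ v)) + b * (v ⬝ᵥ (B⁻¹ *ᵥ v)) := by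
        gcongr
        · exact hA.two_mul_dotProduct_sub_le_dotProduct_inv_mulVec v w
        · exact hB.two_mul_dotProduct_sub_le_dotProduct_inv_mulVec v w

theorem dotProduct_inv_mulVec_le_dotProduct_self [Fintype n] (X : Matrix n m ℝ)
    {D : Matrix m m ℝ} (hD : D.PosSemidef) (hM : (Xᵀ * X + D).PosDef) (y : n → ℝ) :
    (Xᵀ *ᵥ y) ⬝ᵥ ((Xᵀ * X + D)⁻¹ *ᵥ (Xᵀ *ᵥ y)) ≤ y ⬝ᵥ y := by
  set w := (Xᵀ * X + D)⁻¹ *ᵥ (Xᵀ *ᵥ y)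
  have hMw : (Xᵀ * X + D) *ᵥ w = Xᵀ *ᵥ y := hM.mulVec_inv_mulVec _
  have hleft : (Xᵀ *ᵥ y) ⬝ᵥ w = y ⬝ᵥ (X *ᵥ w) := by
    rw [mulVec_transpose, ← dotProduct_mulVec]
  have hsplit : (Xᵀ *ᵥ y) ⬝ᵥ w = (X *ᵥ w) ⬝ᵥ (X *ᵥ w) + w ⬝ᵥ (D *ᵥ w) := by
    rw [← hMw, dotProduct_comm, add_mulVec, dotProduct_add, ← mulVec_mulVec, dotProduct_mulVec,
      vecMul_transpose]
  have hDw : 0 ≤ w ⬝ᵥ (D *ᵥ w) := by simpa using hD.dotProduct_mulVec_nonneg w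
  have hres : 0 ≤ (y - X *ᵥ w) ⬝ᵥ (y - X *ᵥ w) := by
    simpa using dotProduct_self_star_nonneg (y - X *ᵥ w)
  rw [sub_dotProduct, dotProduct_sub, dotProduct_sub, dotProduct_comm (X *ᵥ w) y] at hres
  linarith

end Matrix

theorem ConcaveOn.log {E : Type*} [AddCommMonoid E] [SMul ℝ E] {s : Set E} {f : E → ℝ}
    (hf : ConcaveOn ℝ s f) (hpos : ∀ x ∈ s, 0 < f x) : ConcaveOn ℝ s fun x => Real.log (f x) := by
  refine ⟨hf.1, fun x hx y hy a b ha hb hab => ?_⟩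
  calc a • Real.log (f x) + b • Real.log (f y) ≤ Real.log (a • f x + b • f y) :=
        strictConcaveOn_log_Ioi.concaveOn.2 (hpos x hx) (hpos y hy) ha hb hab
    _ ≤ Real.log (f (a • x + b • y)) :=
        Real.log_le_log (strictConcaveOn_log_Ioi.concaveOn.1 (hpos x hx) (hpos y hy) ha hb hab)
          (hf.2 hx hy ha hb hab)

/-- `h(D) = -(1/2)log det(XᵀX + D) - c·log{b₀ + (1/2)(yᵀy - yᵀX(XᵀX + D)⁻¹Xᵀy)}`
is convex on the set of positive definite diagonal matrices, for `b₀ > 0`, `c > 0`. -/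
theorem stmt2 (n p : ℕ) (X : Matrix (Fin n) (Fin p) ℝ) (y : Fin n → ℝ)
    (b0 c : ℝ) (hb0 : 0 < b0) (hc : 0 < c) :
    ConvexOn ℝ {d : Fin p → ℝ | ∀ j, 0 < d j}
      (fun d => -(1/2) * Real.log ((Xᵀ * X + Matrix.diagonal d).det)
        - c * Real.log (b0 + (1/2) * (y ⬝ᵥ y -
            (Xᵀ.mulVec y) ⬝ᵥ ((Xᵀ * X + Matrix.diagonal d)⁻¹).mulVec (Xᵀ.mulVec y)))) := by
  set P := {d : Fin p → ℝ | ∀ j, 0 < d j}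
  have hP : Convex ℝ P := fun _ hd _ he _ _ ha hb hab j =>
    convex_Ioi (0 : ℝ) (hd j) (he j) ha hb hab
  let g : (Fin p → ℝ) →ᵃ[ℝ] Matrix (Fin p) (Fin p) ℝ :=
    AffineMap.const ℝ _ (Xᵀ * X) + (diagonalLinearMap (Fin p) ℝ ℝ).toAffineMap
  have hgd : ∀ d, g d = Xᵀ * X + diagonal d := fun _ => rfl
  have hXX : (Xᵀ * X).PosSemidef := by
    simpa only [conjTranspose_eq_transpose_of_trivial] using posSemidef_conjTranspose_mul_self X
  have hg : ∀ d ∈ P, (g d).PosDef := fun d hd => PosDef.posSemidef_add hXX (PosDef.diagonal hd)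
  have hlogdet : ConcaveOn ℝ P fun d => Real.log (g d).det :=
    (concaveOn_log_det.comp_affineMap g).subset hg hP
  have hquad : ConvexOn ℝ P fun d => (Xᵀ *ᵥ y) ⬝ᵥ ((g d)⁻¹ *ᵥ (Xᵀ *ᵥ y)) :=
    ((convexOn_dotProduct_inv_mulVec _).comp_affineMap g).subset hg hP
  have half : (0 : ℝ) ≤ 1 / 2 := by norm_num
  have hlog : ConcaveOn ℝ P fun d =>
      Real.log (b0 + (1/2) * (y ⬝ᵥ y - (Xᵀ *ᵥ y) ⬝ᵥ ((g d)⁻¹ *ᵥ (Xᵀ *ᵥ y)))) := by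
    refine ConcaveOn.log ?_ fun d hd => ?_
    · refine ((hquad.neg.smul half).add_const (b0 + (1/2) * (y ⬝ᵥ y))).congr fun d _ => ?_
      simp only [Pi.add_apply, Pi.neg_apply, smul_eq_mul]
      ring
    · have := dotProduct_inv_mulVec_le_dotProduct_self X
        (posSemidef_diagonal_iff.2 fun j => (hd j).le) (hg d hd) y
      rw [hgd]
      linarith
  refine ((hlogdet.neg.smul half).add (hlog.neg.smul hc.le)).congr fun d _ => ?_
  simp only [Pi.add_apply, Pi.neg_apply, smul_eq_mul, hgd]
  ring
end

section
/- With the same partition, the j-th coordinate of (XᵀX + D)⁻¹Xᵀy equals (xⱼᵀPⱼy)/(dⱼ + xⱼᵀPⱼxⱼ), where Pⱼ = Iₙ - X₋ⱼ(X₋ⱼᵀX₋ⱼ + D₋ⱼ)⁻¹X₋ⱼᵀ. -/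
open Matrix

/-- The full design matrix `X = [xⱼ, X₋ⱼ]` with the `j`-th column separated out. -/
noncomputable def Xfull {n p : ℕ} (x : Fin n → ℝ) (Xm : Matrix (Fin n) (Fin p) ℝ) :
    Matrix (Fin n) (Unit ⊕ Fin p) ℝ :=
  Matrix.fromCols (fun i _ => x i) Xm

/-- `Pⱼ = Iₙ - X₋ⱼ(X₋ⱼᵀX₋ⱼ + D₋ⱼ)⁻¹X₋ⱼᵀ`. -/
noncomputable def Pmat {n p : ℕ} (Xm : Matrix (Fin n) (Fin p) ℝ) (dm : Fin p → ℝ) :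
    Matrix (Fin n) (Fin n) ℝ :=
  1 - Xm * (Xmᵀ * Xm + Matrix.diagonal dm)⁻¹ * Xmᵀ

/-!
With the columns ordered as `[xⱼ, X₋ⱼ]`, `XᵀX + D` is a 2×2 block matrix whose lower-right block
`M = X₋ⱼᵀX₋ⱼ + D₋ⱼ` is invertible. The block-inverse formula through the Schur complement
`S = dⱼ + xⱼᵀxⱼ - xⱼᵀX₋ⱼM⁻¹X₋ⱼᵀxⱼ = dⱼ + xⱼᵀPⱼxⱼ` shows that the first block row of
`(XᵀX + D)⁻¹` is `S⁻¹ [1, -xⱼᵀX₋ⱼM⁻¹]`, so the `j`-th coordinate of `(XᵀX + D)⁻¹Xᵀy` is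
`S⁻¹ xⱼᵀ(y - X₋ⱼM⁻¹X₋ⱼᵀy) = S⁻¹ xⱼᵀPⱼy`. Finally `S ≠ 0`, since `det (XᵀX + D) = det M * S` and
both matrices are positive definite.
-/

namespace Matrix

section BlockInverse

variable {k l m α : Type*} [Fintype k] [Fintype l] [Fintype m]
  [DecidableEq k] [DecidableEq l] [DecidableEq m] [CommRing α]

theorem inv_fromBlocks₂₂_mulVec_inl (A : Matrix l l α) (B : Matrix l m α) (C : Matrix m l α)
    (D : Matrix m m α) (hD : IsUnit D.det) (hABCD : IsUnit (fromBlocks A B C D).det)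
    (u : l → α) (v : m → α) :
    ((fromBlocks A B C D)⁻¹ *ᵥ Sum.elim u v) ∘ Sum.inl
      = (A - B * D⁻¹ * C)⁻¹ *ᵥ (u - (B * D⁻¹) *ᵥ v) := by
  let := invertibleOfIsUnitDet D hD
  have hS : IsUnit (A - B * ⅟D * C).det := by
    rw [det_fromBlocks₂₂] at hABCD
    exact isUnit_of_mul_isUnit_right hABCD
  let := invertibleOfIsUnitDet _ hS
  let := fromBlocks₂₂Invertible A B C D
  rw [← invOf_eq_nonsing_inv (fromBlocks A B C D), invOf_fromBlocks₂₂_eq, fromBlocks_mulVec]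
  ext i
  simp [neg_mulVec, ← mulVec_mulVec, Matrix.mul_assoc, mulVec_neg, mulVec_add, sub_eq_add_neg]

theorem inv_gram_fromCols_add_fromBlocks_mulVec_inl (A : Matrix k l α) (B : Matrix k m α)
    (D₁ : Matrix l l α) (D₂ : Matrix m m α) (P : Matrix k k α)
    (hP : P = 1 - B * (Bᵀ * B + D₂)⁻¹ * Bᵀ)
    (hG : IsUnit ((fromCols A B)ᵀ * fromCols A B + fromBlocks D₁ 0 0 D₂).det)
    (hM : IsUnit (Bᵀ * B + D₂).det) (y : k → α) :
    (((fromCols A B)ᵀ * fromCols A B + fromBlocks D₁ 0 0 D₂)⁻¹ *ᵥ ((fromCols A B)ᵀ *ᵥ y))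
        ∘ Sum.inl
      = (D₁ + Aᵀ * P * A)⁻¹ *ᵥ (Aᵀ *ᵥ (P *ᵥ y)) := by
  have hblocks : (fromCols A B)ᵀ * fromCols A B + fromBlocks D₁ 0 0 D₂
      = fromBlocks (Aᵀ * A + D₁) (Aᵀ * B) (Bᵀ * A) (Bᵀ * B + D₂) := by
    rw [transpose_fromCols, fromRows_mul_fromCols, fromBlocks_add, add_zero, add_zero]
  rw [hblocks] at hG ⊢
  have hschur : Aᵀ * A + D₁ - Aᵀ * B * (Bᵀ * B + D₂)⁻¹ * (Bᵀ * A) = D₁ + Aᵀ * P * A := by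
    rw [hP]
    simp only [Matrix.mul_sub, Matrix.sub_mul, Matrix.mul_one, Matrix.mul_assoc]
    abel
  have hrhs : Aᵀ *ᵥ y - (Aᵀ * B * (Bᵀ * B + D₂)⁻¹) *ᵥ (Bᵀ *ᵥ y) = Aᵀ *ᵥ (P *ᵥ y) := by
    simp only [hP, sub_mulVec, one_mulVec, mulVec_sub, mulVec_mulVec, Matrix.mul_assoc]
  rw [transpose_fromCols, fromRows_mulVec, inv_fromBlocks₂₂_mulVec_inl _ _ _ _ hM hG, hschur,
    hrhs]

end BlockInverse

theorem inv_mulVec_apply_of_unique {ι K : Type*} [Unique ι] [Field K] (S : Matrix ι ι K)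
    (v : ι → K) (i : ι) : (S⁻¹ *ᵥ v) i = v i / S i i := by
  simp [inv_subsingleton, div_eq_inv_mul, Subsingleton.elim _ i]

theorem posDef_transpose_mul_self_add_diagonal {k m : Type*} [Fintype k] [Fintype m]
    [DecidableEq m] {d : m → ℝ} (hd : ∀ i, 0 < d i) (X : Matrix k m ℝ) :
    (Xᵀ * X + diagonal d).PosDef :=
  PosDef.posSemidef_add (by simpa using posSemidef_conjTranspose_mul_self X)
    (PosDef.diagonal hd)

end Matrix

/-- The `j`-th coordinate of `(XᵀX + D)⁻¹Xᵀy` equals `(xⱼᵀPⱼy)/(dⱼ + xⱼᵀPⱼxⱼ)`. -/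
theorem stmt5 {n p : ℕ} (x : Fin n → ℝ) (Xm : Matrix (Fin n) (Fin p) ℝ)
    (y : Fin n → ℝ) (dj : ℝ) (hdj : 0 < dj) (dm : Fin p → ℝ) (hdm : ∀ j, 0 < dm j) :
    ((((Xfull x Xm)ᵀ * Xfull x Xm
        + Matrix.diagonal (Sum.elim (fun _ => dj) dm))⁻¹).mulVec
          ((Xfull x Xm)ᵀ.mulVec y)) (Sum.inl ())
      = (x ⬝ᵥ (Pmat Xm dm).mulVec y) / (dj + x ⬝ᵥ (Pmat Xm dm).mulVec x) := by
  have hd : ∀ i, 0 < Sum.elim (fun _ : Unit => dj) dm i := by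
    rintro (_ | i)
    exacts [hdj, hdm i]
  have hG := (posDef_transpose_mul_self_add_diagonal hd (Xfull x Xm)).isUnit
  have hM := (posDef_transpose_mul_self_add_diagonal hdm Xm).isUnit
  rw [← fromBlocks_diagonal] at hG ⊢
  rw [isUnit_iff_isUnit_det] at hG hM
  refine (congrFun (inv_gram_fromCols_add_fromBlocks_mulVec_inl (replicateCol Unit x) Xm _ _
    (Pmat Xm dm) rfl hG hM y) ()).trans ?_
  rw [inv_mulVec_apply_of_unique, transpose_replicateCol, replicateRow_mulVec_eq_const,
    Matrix.add_apply, diagonal_apply_eq, ← replicateRow_vecMul,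
    replicateRow_mul_replicateCol_apply, ← dotProduct_mulVec]
  rfl
end
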